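/- For φ ∈ (1, ∞) set D(φ) = 1/v(φ)² − φ ∫ r²/(1 + v(φ)·r)² dP(r), ṽ(φ) = 1/D(φ), and ṽ_g(φ) = ṽ(φ) · φ ∫ r²/(1 + v(φ)·r)² dP(r). Then: (i) D(φ) > 0 for every φ ∈ (1, ∞); (ii) ṽ and ṽ_g are continuous on (1, ∞); (iii) ṽ(φ) → +∞ and ṽ_g(φ) → +∞ as φ → 1⁺; and (iv) ṽ(φ) → 0 and ṽ_g(φ) → 0 as φ → ∞. -/

import Mathlib

/-!
Write `t(r) = v r / (1 + v r)`, which lies in `(0, 1)` on `[a, b]`. The fixed-point equation says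
`∫ t dP = 1/φ`, and `v² ∫ r²/(1 + v r)² dP = ∫ t² dP`, so with `s := v² D = 1 - φ ∫ t² dP` one has
`ṽ = v²/s` and `ṽ_g = 1/s - 1`. Now `t² < t` gives `s > 0`, Jensen's `(∫ t)² ≤ ∫ t²` gives
`s ≤ 1 - 1/φ`, and `t ≤ b v` gives `s ≥ 1 - b v`; comparing `t(r)` with `t(a)` and `t(b)` gives
`1/(b(φ - 1)) ≤ v ≤ 1/(a(φ - 1))`. Hence `s → 0⁺` and `v → ∞` as `φ → 1⁺`, while `v → 0` and
`s → 1` as `φ → ∞`. Continuity of `v` needs only the strict monotonicity of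
`x ↦ ∫ x r/(1 + x r) dP`.
-/

open Filter MeasureTheory Set Topology

theorem integral_pos_of_ae_pos {α : Type*} [MeasurableSpace α] {μ : Measure α} [NeZero μ]
    {f : α → ℝ} (hfi : Integrable f μ) (hf : ∀ᵐ x ∂μ, 0 < f x) : 0 < ∫ x, f x ∂μ := by
  rw [integral_pos_iff_support_of_nonneg_ae (hf.mono fun _ h => h.le) hfi, pos_iff_ne_zero]
  intro h
  obtain ⟨x, hfx, hx⟩ := (hf.and (measure_eq_zero_iff_ae_notMem.1 h)).exists
  exact hx hfx.ne'

theorem integral_lt_integral_of_ae_lt {α : Type*} [MeasurableSpace α] {μ : Measure α} [NeZero μ]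
    {f g : α → ℝ} (hf : Integrable f μ) (hg : Integrable g μ) (hfg : ∀ᵐ x ∂μ, f x < g x) :
    ∫ x, f x ∂μ < ∫ x, g x ∂μ := by
  rw [← sub_pos, ← integral_sub hg hf]
  exact integral_pos_of_ae_pos (hg.sub hf) (hfg.mono fun _ h => sub_pos.2 h)

theorem continuousWithinAt_of_strictMonoOn_comp {g v h : ℝ → ℝ} {s T : Set ℝ} {x₀ : ℝ}
    (hg : StrictMonoOn g T) (hT : T ∈ 𝓝 (v x₀)) (hvT : ∀ x ∈ s, v x ∈ T)
    (hgv : ∀ x ∈ s, g (v x) = h x) (hx₀ : x₀ ∈ s) (hh : ContinuousWithinAt h s x₀) :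
    ContinuousWithinAt v s x₀ := by
  refine tendsto_order.2 ⟨fun l hl => ?_, fun u hu => ?_⟩
  · obtain ⟨l', ⟨hll', hl'v⟩, hsub⟩ := exists_Ioc_subset_of_mem_nhds' hT hl
    obtain ⟨m, hl'm, hmv⟩ := exists_between hl'v
    have hmT : m ∈ T := hsub ⟨hl'm, hmv.le⟩
    have hgm : g m < h x₀ := hgv x₀ hx₀ ▸ hg hmT (mem_of_mem_nhds hT) hmv
    filter_upwards [(tendsto_order.1 hh).1 _ hgm, self_mem_nhdsWithin] with x hx hxs
    rw [← hgv x hxs, hg.lt_iff_lt hmT (hvT x hxs)] at hx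
    exact hll'.trans_lt (hl'm.trans hx)
  · obtain ⟨u', ⟨hvu', hu'u⟩, hsub⟩ := exists_Ico_subset_of_mem_nhds' hT hu
    obtain ⟨m, hvm, hmu'⟩ := exists_between hvu'
    have hmT : m ∈ T := hsub ⟨hvm.le, hmu'⟩
    have hgm : h x₀ < g m := hgv x₀ hx₀ ▸ hg (mem_of_mem_nhds hT) hmT hvm
    filter_upwards [(tendsto_order.1 hh).2 _ hgm, self_mem_nhdsWithin] with x hx hxs
    rw [← hgv x hxs, hg.lt_iff_lt (hvT x hxs) hmT] at hx
    exact (hx.trans hmu').trans_le hu'u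

theorem integrable_of_continuousOn_Icc {a b : ℝ} {P : Measure ℝ} [IsFiniteMeasure P]
    (hsupp : ∀ᵐ r ∂P, r ∈ Icc a b) {f : ℝ → ℝ} (hf : ContinuousOn f (Icc a b)) :
    Integrable f P := by
  rw [← Measure.restrict_eq_self_of_ae_mem hsupp]
  exact hf.integrableOn_compact isCompact_Icc

noncomputable def shrinkage (x r : ℝ) : ℝ := x * r / (1 + x * r)

theorem shrinkage_nonneg {x r : ℝ} (hx : 0 ≤ x) (hr : 0 ≤ r) : 0 ≤ shrinkage x r := by
  unfold shrinkage; positivity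

theorem shrinkage_pos {x r : ℝ} (hx : 0 < x) (hr : 0 < r) : 0 < shrinkage x r := by
  unfold shrinkage; positivity

theorem shrinkage_lt_one {x r : ℝ} (hx : 0 ≤ x) (hr : 0 ≤ r) : shrinkage x r < 1 := by
  unfold shrinkage; rw [div_lt_one (by positivity)]; linarith

theorem shrinkage_le_mul {x r : ℝ} (hx : 0 ≤ x) (hr : 0 ≤ r) : shrinkage x r ≤ x * r :=
  div_le_self (by positivity) (by nlinarith [mul_nonneg hx hr])

theorem shrinkage_strictMonoOn {r : ℝ} (hr : 0 < r) : StrictMonoOn (shrinkage · r) (Ici 0) := by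
  intro x hx y hy hxy
  simp only [shrinkage]
  rw [div_lt_div_iff₀ (by nlinarith [mem_Ici.1 hx]) (by nlinarith [mem_Ici.1 hy])]
  nlinarith

theorem shrinkage_le_shrinkage {x r s : ℝ} (hx : 0 ≤ x) (hr : 0 ≤ r) (hrs : r ≤ s) :
    shrinkage x r ≤ shrinkage x s := by
  unfold shrinkage
  rw [div_le_div_iff₀ (by positivity) (by nlinarith [mul_nonneg hx hr])]
  nlinarith

theorem shrinkage_sq (x r : ℝ) : shrinkage x r ^ 2 = x ^ 2 * (r ^ 2 / (1 + x * r) ^ 2) := by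
  rw [shrinkage, div_pow, mul_pow, mul_div_assoc]

theorem continuousOn_shrinkage {x : ℝ} (hx : 0 ≤ x) : ContinuousOn (shrinkage x) (Ici 0) :=
  (continuousOn_const.mul continuousOn_id).div (continuousOn_const.add
    (continuousOn_const.mul continuousOn_id)) fun r (hr : 0 ≤ r) => by positivity

noncomputable def fixedPointMap (P : Measure ℝ) (x : ℝ) : ℝ := ∫ r, shrinkage x r ∂P

noncomputable def sqResolventIntegral (P : Measure ℝ) (x : ℝ) : ℝ :=
  ∫ r, r ^ 2 / (1 + x * r) ^ 2 ∂P

theorem sq_mul_sqResolventIntegral (P : Measure ℝ) (x : ℝ) :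
    x ^ 2 * sqResolventIntegral P x = ∫ r, shrinkage x r ^ 2 ∂P := by
  simp_rw [shrinkage_sq]
  exact (integral_const_mul _ _).symm

section Moments

variable {a b : ℝ} {P : Measure ℝ} [IsProbabilityMeasure P] {x : ℝ}

theorem integrable_shrinkage (ha : 0 ≤ a) (hsupp : ∀ᵐ r ∂P, r ∈ Icc a b) (hx : 0 ≤ x) :
    Integrable (shrinkage x) P :=
  integrable_of_continuousOn_Icc hsupp
    ((continuousOn_shrinkage hx).mono fun _ hr => ha.trans hr.1)

theorem integrable_shrinkage_sq (ha : 0 ≤ a) (hsupp : ∀ᵐ r ∂P, r ∈ Icc a b) (hx : 0 ≤ x) :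
    Integrable (fun r => shrinkage x r ^ 2) P :=
  integrable_of_continuousOn_Icc hsupp
    (((continuousOn_shrinkage hx).pow 2).mono fun _ hr => ha.trans hr.1)

theorem strictMonoOn_fixedPointMap (ha : 0 < a) (hsupp : ∀ᵐ r ∂P, r ∈ Icc a b) :
    StrictMonoOn (fixedPointMap P) (Ici 0) := fun _ hx _ hy hxy =>
  integral_lt_integral_of_ae_lt (integrable_shrinkage ha.le hsupp hx)
    (integrable_shrinkage ha.le hsupp hy)
    (hsupp.mono fun _ hr => shrinkage_strictMonoOn (ha.trans_le hr.1) hx hy hxy)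

theorem shrinkage_le_fixedPointMap (ha : 0 ≤ a) (hsupp : ∀ᵐ r ∂P, r ∈ Icc a b) (hx : 0 ≤ x) :
    shrinkage x a ≤ fixedPointMap P x := by
  simpa [fixedPointMap] using
    integral_mono_ae (integrable_const _) (integrable_shrinkage ha hsupp hx)
    (hsupp.mono fun _ hr => shrinkage_le_shrinkage hx ha hr.1)

theorem fixedPointMap_le_shrinkage (ha : 0 ≤ a) (hsupp : ∀ᵐ r ∂P, r ∈ Icc a b) (hx : 0 ≤ x) :
    fixedPointMap P x ≤ shrinkage x b := by
  simpa [fixedPointMap] using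
    integral_mono_ae (integrable_shrinkage ha hsupp hx) (integrable_const _)
    (hsupp.mono fun _ hr => shrinkage_le_shrinkage hx (ha.trans hr.1) hr.2)

theorem sq_fixedPointMap_le (ha : 0 ≤ a) (hsupp : ∀ᵐ r ∂P, r ∈ Icc a b) (hx : 0 ≤ x) :
    fixedPointMap P x ^ 2 ≤ x ^ 2 * sqResolventIntegral P x := by
  rw [sq_mul_sqResolventIntegral]
  exact (convexOn_pow 2).map_integral_le (continuousOn_pow 2) isClosed_Ici
    (hsupp.mono fun _ hr => shrinkage_nonneg hx (ha.trans hr.1))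
    (integrable_shrinkage ha hsupp hx) (integrable_shrinkage_sq ha hsupp hx)

theorem sq_mul_sqResolventIntegral_lt (ha : 0 < a) (hsupp : ∀ᵐ r ∂P, r ∈ Icc a b) (hx : 0 < x) :
    x ^ 2 * sqResolventIntegral P x < fixedPointMap P x := by
  rw [sq_mul_sqResolventIntegral]
  refine integral_lt_integral_of_ae_lt (integrable_shrinkage_sq ha.le hsupp hx.le)
    (integrable_shrinkage ha.le hsupp hx.le) (hsupp.mono fun r hr => ?_)
  have hr0 : 0 < r := ha.trans_le hr.1
  have := shrinkage_lt_one hx.le hr0.le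
  nlinarith [shrinkage_pos hx hr0]

theorem sq_mul_sqResolventIntegral_le (ha : 0 ≤ a) (hsupp : ∀ᵐ r ∂P, r ∈ Icc a b)
    (hx : 0 ≤ x) : x ^ 2 * sqResolventIntegral P x ≤ x * b * fixedPointMap P x := by
  rw [sq_mul_sqResolventIntegral, fixedPointMap, ← integral_const_mul]
  refine integral_mono_ae (integrable_shrinkage_sq ha hsupp hx)
    ((integrable_shrinkage ha hsupp hx).const_mul _) (hsupp.mono fun r hr => ?_)
  have hr0 : 0 ≤ r := ha.trans hr.1
  have hle : shrinkage x r ≤ x * b :=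
    (shrinkage_le_mul hx hr0).trans (mul_le_mul_of_nonneg_left hr.2 hx)
  nlinarith [shrinkage_nonneg hx hr0]

theorem continuousOn_sqResolventIntegral (ha : 0 ≤ a) (hsupp : ∀ᵐ r ∂P, r ∈ Icc a b) :
    ContinuousOn (sqResolventIntegral P) (Ici 0) := by
  refine continuousOn_of_dominated (bound := fun _ => b ^ 2)
    (fun x _ => Measurable.aestronglyMeasurable
      (by fun_prop : Measurable fun r : ℝ => r ^ 2 / (1 + x * r) ^ 2))
    (fun x (hx : 0 ≤ x) => hsupp.mono fun r hr => ?_) (integrable_const _)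
    (hsupp.mono fun r hr => ?_)
  · have hr0 : 0 ≤ r := ha.trans hr.1
    have h1 : 1 ≤ (1 + x * r) ^ 2 := one_le_pow₀ (by nlinarith [mul_nonneg hx hr0])
    rw [Real.norm_of_nonneg (by positivity)]
    calc r ^ 2 / (1 + x * r) ^ 2 ≤ r ^ 2 := div_le_self (sq_nonneg r) h1
      _ ≤ b ^ 2 := pow_le_pow_left₀ hr0 hr.2 2
  · have hr0 : 0 ≤ r := ha.trans hr.1
    exact continuousOn_const.div ((continuousOn_const.add (continuousOn_id.mul
      continuousOn_const)).pow 2) fun x (hx : 0 ≤ x) => by positivity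

end Moments

def SolvesFixedPoint (P : Measure ℝ) (v : ℝ → ℝ) : Prop :=
  ∀ φ ∈ Ioi (1 : ℝ), 0 < v φ ∧ 1 / φ = fixedPointMap P (v φ)

-- `v(φ)² · D(φ)` in the notation of the statement.
noncomputable def scaledDenom (P : Measure ℝ) (v : ℝ → ℝ) (φ : ℝ) : ℝ :=
  1 - φ * (v φ ^ 2 * sqResolventIntegral P (v φ))

namespace SolvesFixedPoint

variable {a b : ℝ} {P : Measure ℝ} [IsProbabilityMeasure P] {v : ℝ → ℝ} {φ : ℝ}

theorem le_inv_mul_sub_one (ha : 0 < a) (hsupp : ∀ᵐ r ∂P, r ∈ Icc a b)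
    (hv : SolvesFixedPoint P v) (hφ : 1 < φ) : v φ ≤ (a * (φ - 1))⁻¹ := by
  obtain ⟨hv0, hfix⟩ := hv φ hφ
  have h := hfix ▸ shrinkage_le_fixedPointMap ha.le hsupp hv0.le
  rw [shrinkage, div_le_div_iff₀ (by positivity) (by linarith)] at h
  rw [le_inv_comm₀ hv0 (by nlinarith), ← one_div, le_div_iff₀ hv0]
  nlinarith

theorem inv_mul_sub_one_le (ha : 0 ≤ a) (hsupp : ∀ᵐ r ∂P, r ∈ Icc a b)
    (hv : SolvesFixedPoint P v) (hφ : 1 < φ) : (b * (φ - 1))⁻¹ ≤ v φ := by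
  obtain ⟨hv0, hfix⟩ := hv φ hφ
  have hb : 0 ≤ b := by
    obtain ⟨r, hr⟩ := hsupp.exists
    exact ha.trans (hr.1.trans hr.2)
  have h := hfix ▸ fixedPointMap_le_shrinkage ha hsupp hv0.le
  rw [shrinkage, div_le_div_iff₀ (by linarith) (by positivity)] at h
  rw [inv_le_comm₀ (by nlinarith) hv0, ← one_div, div_le_iff₀ hv0]
  nlinarith

theorem tendsto_atTop (ha : 0 < a) (hsupp : ∀ᵐ r ∂P, r ∈ Icc a b)
    (hv : SolvesFixedPoint P v) : Tendsto v atTop (𝓝 0) := by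
  have hbound : Tendsto (fun φ => (a * (φ - 1))⁻¹) atTop (𝓝 0) :=
    tendsto_inv_atTop_zero.comp <|
      (tendsto_atTop_add_const_right _ (-1) tendsto_id).const_mul_atTop ha
  refine tendsto_of_tendsto_of_tendsto_of_le_of_le' tendsto_const_nhds hbound ?_ ?_ <;>
    filter_upwards [eventually_gt_atTop 1] with φ hφ
  exacts [(hv φ hφ).1.le, hv.le_inv_mul_sub_one ha hsupp hφ]

theorem tendsto_nhdsGT_one (ha : 0 < a) (hsupp : ∀ᵐ r ∂P, r ∈ Icc a b)
    (hv : SolvesFixedPoint P v) : Tendsto v (𝓝[>] 1) atTop := by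
  obtain ⟨r, hr⟩ := hsupp.exists
  have hb : 0 < b := ha.trans_le (hr.1.trans hr.2)
  have hlim : Tendsto (fun φ => b * (φ - 1)) (𝓝[>] 1) (𝓝[>] 0) := by
    refine tendsto_nhdsWithin_iff.2 ⟨?_, ?_⟩
    · have h : Tendsto (fun φ : ℝ => b * (φ - 1)) (𝓝 1) (𝓝 (b * (1 - 1))) :=
        (tendsto_id.sub_const 1).const_mul b
      rw [sub_self, mul_zero] at h
      exact h.mono_left nhdsWithin_le_nhds
    · filter_upwards [self_mem_nhdsWithin] with φ (hφ : 1 < φ) using mul_pos hb (sub_pos.2 hφ)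
  refine tendsto_atTop_mono' _ ?_ (tendsto_inv_nhdsGT_zero.comp hlim)
  filter_upwards [self_mem_nhdsWithin] with φ hφ using hv.inv_mul_sub_one_le ha.le hsupp hφ

theorem continuousOn (ha : 0 < a) (hsupp : ∀ᵐ r ∂P, r ∈ Icc a b)
    (hv : SolvesFixedPoint P v) : ContinuousOn v (Ioi 1) := fun φ hφ =>
  continuousWithinAt_of_strictMonoOn_comp
    ((strictMonoOn_fixedPointMap ha hsupp).mono Ioi_subset_Ici_self) (Ioi_mem_nhds (hv φ hφ).1)
    (fun ψ hψ => (hv ψ hψ).1) (fun ψ hψ => (hv ψ hψ).2.symm) hφ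
    ((continuousOn_const.div continuousOn_id fun ψ (hψ : 1 < ψ) => by positivity) φ hφ)

theorem scaledDenom_pos (ha : 0 < a) (hsupp : ∀ᵐ r ∂P, r ∈ Icc a b)
    (hv : SolvesFixedPoint P v) (hφ : 1 < φ) : 0 < scaledDenom P v φ := by
  obtain ⟨hv0, hfix⟩ := hv φ hφ
  have h := hfix ▸ sq_mul_sqResolventIntegral_lt ha hsupp hv0
  rw [lt_div_iff₀ (by linarith)] at h
  rw [scaledDenom]
  linarith

theorem scaledDenom_le (ha : 0 ≤ a) (hsupp : ∀ᵐ r ∂P, r ∈ Icc a b)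
    (hv : SolvesFixedPoint P v) (hφ : 1 < φ) : scaledDenom P v φ ≤ 1 - 1 / φ := by
  obtain ⟨hv0, hfix⟩ := hv φ hφ
  have h := hfix ▸ sq_fixedPointMap_le ha hsupp hv0.le
  have hφ0 : 0 < φ := by linarith
  rw [scaledDenom, sub_le_sub_iff_left]
  calc 1 / φ = φ * (1 / φ) ^ 2 := by field_simp
    _ ≤ _ := mul_le_mul_of_nonneg_left h hφ0.le

theorem sub_le_scaledDenom (ha : 0 ≤ a) (hsupp : ∀ᵐ r ∂P, r ∈ Icc a b)
    (hv : SolvesFixedPoint P v) (hφ : 1 < φ) : 1 - b * v φ ≤ scaledDenom P v φ := by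
  obtain ⟨hv0, hfix⟩ := hv φ hφ
  have h := hfix ▸ sq_mul_sqResolventIntegral_le ha hsupp hv0.le
  have hφ0 : 0 < φ := by linarith
  rw [scaledDenom, sub_le_sub_iff_left]
  calc φ * (v φ ^ 2 * sqResolventIntegral P (v φ)) ≤ φ * (v φ * b * (1 / φ)) :=
        mul_le_mul_of_nonneg_left h hφ0.le
    _ = b * v φ := by field_simp

theorem continuousOn_scaledDenom (ha : 0 < a) (hsupp : ∀ᵐ r ∂P, r ∈ Icc a b)
    (hv : SolvesFixedPoint P v) : ContinuousOn (scaledDenom P v) (Ioi 1) := by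
  have hvc := hv.continuousOn ha hsupp
  have hJ := (continuousOn_sqResolventIntegral ha.le hsupp).comp hvc
    fun φ hφ => mem_Ici.2 (hv φ hφ).1.le
  exact continuousOn_const.sub (continuousOn_id.mul ((hvc.pow 2).mul hJ))

theorem tendsto_scaledDenom_nhdsGT_one (ha : 0 < a) (hsupp : ∀ᵐ r ∂P, r ∈ Icc a b)
    (hv : SolvesFixedPoint P v) : Tendsto (scaledDenom P v) (𝓝[>] 1) (𝓝[>] 0) := by
  have hbound : Tendsto (fun φ : ℝ => 1 - 1 / φ) (𝓝[>] 1) (𝓝 0) := by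
    have h : Tendsto (fun φ : ℝ => 1 - 1 / φ) (𝓝 1) (𝓝 (1 - 1 / 1)) :=
      tendsto_const_nhds.sub (tendsto_const_nhds.div tendsto_id one_ne_zero)
    rw [div_one, sub_self] at h
    exact h.mono_left nhdsWithin_le_nhds
  refine tendsto_nhdsWithin_iff.2 ⟨tendsto_of_tendsto_of_tendsto_of_le_of_le' tendsto_const_nhds
    hbound ?_ ?_, ?_⟩ <;> filter_upwards [self_mem_nhdsWithin] with φ hφ
  exacts [(hv.scaledDenom_pos ha hsupp hφ).le, hv.scaledDenom_le ha.le hsupp hφ,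
    hv.scaledDenom_pos ha hsupp hφ]

theorem tendsto_scaledDenom_atTop (ha : 0 < a) (hsupp : ∀ᵐ r ∂P, r ∈ Icc a b)
    (hv : SolvesFixedPoint P v) : Tendsto (scaledDenom P v) atTop (𝓝 1) := by
  have hlower : Tendsto (fun φ => 1 - b * v φ) atTop (𝓝 1) := by
    simpa using tendsto_const_nhds.sub ((hv.tendsto_atTop ha hsupp).const_mul b)
  refine tendsto_of_tendsto_of_tendsto_of_le_of_le' hlower tendsto_const_nhds ?_ ?_ <;>
    filter_upwards [eventually_gt_atTop 1] with φ hφ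
  · exact hv.sub_le_scaledDenom ha.le hsupp hφ
  · exact (hv.scaledDenom_le ha.le hsupp hφ).trans (sub_le_self 1 (by positivity))

end SolvesFixedPoint

theorem inflation_factors_properties_general (a b : ℝ) (ha : 0 < a)
    (P : Measure ℝ) [IsProbabilityMeasure P] (hsupp : ∀ᵐ r ∂P, r ∈ Set.Icc a b)
    (v : ℝ → ℝ)
    (hv : ∀ φ ∈ Set.Ioi (1 : ℝ),
      0 < v φ ∧ 1 / φ = ∫ r, v φ * r / (1 + v φ * r) ∂P)
    (D tv tvg : ℝ → ℝ)
    (hD : ∀ φ ∈ Set.Ioi (1 : ℝ),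
      D φ = 1 / (v φ) ^ 2 - φ * ∫ r, r ^ 2 / (1 + v φ * r) ^ 2 ∂P)
    (htv : ∀ φ ∈ Set.Ioi (1 : ℝ), tv φ = 1 / D φ)
    (htvg : ∀ φ ∈ Set.Ioi (1 : ℝ),
      tvg φ = tv φ * (φ * ∫ r, r ^ 2 / (1 + v φ * r) ^ 2 ∂P)) :
    (∀ φ ∈ Set.Ioi (1 : ℝ), 0 < D φ) ∧
    ContinuousOn tv (Set.Ioi 1) ∧
    ContinuousOn tvg (Set.Ioi 1) ∧
    Tendsto tv (nhdsWithin 1 (Set.Ioi 1)) atTop ∧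
    Tendsto tvg (nhdsWithin 1 (Set.Ioi 1)) atTop ∧
    Tendsto tv atTop (nhds 0) ∧
    Tendsto tvg atTop (nhds 0) := by
  have hv' : SolvesFixedPoint P v := hv
  set s := scaledDenom P v
  have hs : ∀ φ ∈ Ioi (1 : ℝ), 0 < s φ := fun φ hφ => hv'.scaledDenom_pos ha hsupp hφ
  have hJ : ∀ φ ∈ Ioi (1 : ℝ), φ * ∫ r, r ^ 2 / (1 + v φ * r) ^ 2 ∂P = (1 - s φ) / v φ ^ 2 :=
    fun φ hφ => by
      rw [eq_div_iff (pow_ne_zero 2 (hv φ hφ).1.ne')]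
      simp only [s, scaledDenom, sqResolventIntegral]
      ring
  have hD' : ∀ φ ∈ Ioi (1 : ℝ), D φ = s φ / v φ ^ 2 := fun φ hφ => by
    rw [hD φ hφ, hJ φ hφ, ← sub_div, sub_sub_cancel]
  have htv' : ∀ φ ∈ Ioi (1 : ℝ), tv φ = v φ ^ 2 * (s φ)⁻¹ := fun φ hφ => by
    rw [htv φ hφ, hD' φ hφ, one_div_div, div_eq_mul_inv]
  have htvg' : ∀ φ ∈ Ioi (1 : ℝ), tvg φ = (s φ)⁻¹ + -1 := fun φ hφ => by
    rw [htvg φ hφ, htv' φ hφ, hJ φ hφ]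
    field_simp [(hv φ hφ).1.ne', (hs φ hφ).ne']
    ring
  have hinv_cont := (hv'.continuousOn_scaledDenom ha hsupp).inv₀ fun φ hφ => (hs φ hφ).ne'
  have hinv_one := tendsto_inv_nhdsGT_zero.comp (hv'.tendsto_scaledDenom_nhdsGT_one ha hsupp)
  have hinv_top := (hv'.tendsto_scaledDenom_atTop ha hsupp).inv₀ one_ne_zero
  refine ⟨fun φ hφ => hD' φ hφ ▸ div_pos (hs φ hφ) (pow_pos (hv φ hφ).1 2),
    (((hv'.continuousOn ha hsupp).pow 2).mul hinv_cont).congr htv',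
    (hinv_cont.add continuousOn_const).congr htvg', ?_, ?_, ?_, ?_⟩
  · refine (((tendsto_pow_atTop two_ne_zero).comp
      (hv'.tendsto_nhdsGT_one ha hsupp)).atTop_mul_atTop₀ hinv_one).congr' ?_
    filter_upwards [self_mem_nhdsWithin] with φ hφ using (htv' φ hφ).symm
  · refine (tendsto_atTop_add_const_right _ (-1) hinv_one).congr' ?_
    filter_upwards [self_mem_nhdsWithin] with φ hφ using (htvg' φ hφ).symm
  · refine (((hv'.tendsto_atTop ha hsupp).pow 2).mul hinv_top).congr' ?_ |>.trans (by simp)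
    filter_upwards [eventually_gt_atTop 1] with φ hφ using (htv' φ hφ).symm
  · refine (hinv_top.add_const (-1)).congr' ?_ |>.trans (by simp)
    filter_upwards [eventually_gt_atTop 1] with φ hφ using (htvg' φ hφ).symm

/-- **Properties of the variance and bias inflation factors `ṽ` and `ṽ_g`.**
Let `0 < a ≤ b`, `P` a probability measure supported in `[a, b]`, and `v : (1, ∞) → ℝ`
with `v φ > 0` the unique solution of `1/φ = ∫ v(φ)·r/(1 + v(φ)·r) dP(r)`. With
`D(φ) = 1/v(φ)² − φ ∫ r²/(1 + v(φ)·r)² dP(r)`, `ṽ(φ) = 1/D(φ)` and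
`ṽ_g(φ) = ṽ(φ)·φ ∫ r²/(1 + v(φ)·r)² dP(r)`, we have:
(i) `D(φ) > 0` on `(1, ∞)`; (ii) `ṽ` and `ṽ_g` are continuous on `(1, ∞)`;
(iii) `ṽ(φ) → +∞` and `ṽ_g(φ) → +∞` as `φ → 1⁺`; and
(iv) `ṽ(φ) → 0` and `ṽ_g(φ) → 0` as `φ → ∞`. -/
theorem inflation_factors_properties (a b : ℝ) (ha : 0 < a) (hab : a ≤ b)
    (P : Measure ℝ) [IsProbabilityMeasure P] (hsupp : ∀ᵐ r ∂P, r ∈ Set.Icc a b)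
    (v : ℝ → ℝ)
    (hv : ∀ φ ∈ Set.Ioi (1 : ℝ),
      0 < v φ ∧ 1 / φ = ∫ r, v φ * r / (1 + v φ * r) ∂P)
    (D tv tvg : ℝ → ℝ)
    (hD : ∀ φ ∈ Set.Ioi (1 : ℝ),
      D φ = 1 / (v φ) ^ 2 - φ * ∫ r, r ^ 2 / (1 + v φ * r) ^ 2 ∂P)
    (htv : ∀ φ ∈ Set.Ioi (1 : ℝ), tv φ = 1 / D φ)
    (htvg : ∀ φ ∈ Set.Ioi (1 : ℝ),
      tvg φ = tv φ * (φ * ∫ r, r ^ 2 / (1 + v φ * r) ^ 2 ∂P)) :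
    (∀ φ ∈ Set.Ioi (1 : ℝ), 0 < D φ) ∧
    ContinuousOn tv (Set.Ioi 1) ∧
    ContinuousOn tvg (Set.Ioi 1) ∧
    Tendsto tv (nhdsWithin 1 (Set.Ioi 1)) atTop ∧
    Tendsto tvg (nhdsWithin 1 (Set.Ioi 1)) atTop ∧
    Tendsto tv atTop (nhds 0) ∧
    Tendsto tvg atTop (nhds 0) :=
  inflation_factors_properties_general a b ha P hsupp v hv D tv tvg hD htv htvg
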